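/- arXiv:math/0507347 — 4 statements merged into one kernel-verified Lean document; each statement's English description precedes it below -/
import Mathlib

section
/- Let ψ be an ℝ⁺ coding function with one-sided derivatives a_k = (ψ_{k-1})'₋(k) and b_k = (ψ_k)'₊(k) at integer points. For α ∈ ℕ, α ≥ 2, and m ∈ {1, …, α−1}, the function f̂_α(u) = ψ(α − ψ⁻¹(u)) has right derivative −a_{α−m}/b_m and left derivative −b_{α−m}/a_m at ψ(m); hence f̂_α is differentiable at ψ(m) if and only if a_m · a_{α−m} = b_m · b_{α−m}. -/
open Set Filter Topology

/-- One-sided derivatives of f̂_α(u) = ψ(α − ψ⁻¹(u)) at ψ(m):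
the right derivative is −a_{α−m}/b_m and the left derivative is −b_{α−m}/a_m,
where a_k, b_k are the one-sided derivatives of ψ at k; hence f̂_α is
differentiable at ψ(m) iff a_m·a_{α−m} = b_m·b_{α−m}. -/
theorem fhat_one_sided_derivatives
    (ψ φ : ℝ → ℝ) (M : ℝ) (a b : ℕ → ℝ)
    (hψ0 : ψ 0 = 0)
    (hmono : StrictMonoOn ψ (Set.Ici 0))
    (hcont : ContinuousOn ψ (Set.Ici 0))
    (hC1 : ∀ m : ℕ, ContDiffOn ℝ 1 ψ (Set.Icc (m : ℝ) (m + 1)))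
    (hbij : Set.BijOn ψ (Set.Ici 0) (Set.Ico 0 M))
    (hφψ : ∀ x ∈ Set.Ici (0:ℝ), φ (ψ x) = x)
    (hψφ : ∀ u ∈ Set.Ico (0:ℝ) M, ψ (φ u) = u)
    (ha : ∀ k : ℕ, 1 ≤ k → HasDerivWithinAt ψ (a k) (Set.Iic (k : ℝ)) (k : ℝ))
    (hb : ∀ k : ℕ, HasDerivWithinAt ψ (b k) (Set.Ici (k : ℝ)) (k : ℝ))
    (hapos : ∀ k : ℕ, 1 ≤ k → 0 < a k)
    (hbpos : ∀ k : ℕ, 0 < b k)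
    (α : ℕ) (hα : 2 ≤ α)
    (m : ℕ) (hm1 : 1 ≤ m) (hm2 : m ≤ α - 1) :
    HasDerivWithinAt (fun u => ψ ((α : ℝ) - φ u))
      (-(a (α - m)) / b m) (Set.Ici (ψ (m : ℝ))) (ψ (m : ℝ)) ∧
    HasDerivWithinAt (fun u => ψ ((α : ℝ) - φ u))
      (-(b (α - m)) / a m) (Set.Iic (ψ (m : ℝ))) (ψ (m : ℝ)) ∧
    (DifferentiableAt ℝ (fun u => ψ ((α : ℝ) - φ u)) (ψ (m : ℝ)) ↔
      a m * a (α - m) = b m * b (α - m)) := by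
  have hm_lt : m < α := by omega
  have hαm1 : 1 ≤ α - m := by omega
  have hcast : ((α - m : ℕ) : ℝ) = (α : ℝ) - (m : ℝ) := by
    push_cast [Nat.cast_sub hm_lt.le]; ring
  set u₀ : ℝ := ψ (m : ℝ) with hu₀
  have hm0 : (0:ℝ) < (m:ℝ) := by exact_mod_cast hm1
  have hu₀pos : 0 < u₀ := by
    have := hmono Set.self_mem_Ici (le_of_lt hm0) hm0
    rwa [hψ0] at this
  have hu₀M : u₀ < M := (hbij.mapsTo (le_of_lt hm0)).2
  have hφψm : φ u₀ = (m:ℝ) := hφψ _ (le_of_lt hm0)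
  have hφ0 : ∀ u ∈ Ico (0:ℝ) M, 0 ≤ φ u := by
    intro u hu
    obtain ⟨x, hx, rfl⟩ := hbij.surjOn hu
    rw [hφψ x hx]; exact hx
  have hge : ∀ u ∈ Ico (0:ℝ) M, u₀ ≤ u → (m:ℝ) ≤ φ u := by
    intro u hu h
    by_contra hlt
    push_neg at hlt
    have := hmono (hφ0 u hu) (le_of_lt hm0) hlt
    rw [hψφ u hu] at this; linarith
  have hle : ∀ u ∈ Ico (0:ℝ) M, u ≤ u₀ → φ u ≤ (m:ℝ) := by
    intro u hu h
    by_contra hlt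
    push_neg at hlt
    have := hmono (le_of_lt hm0) (hφ0 u hu) hlt
    rw [hψφ u hu] at this; linarith
  have hne : ∀ u ∈ Ico (0:ℝ) M, u ≠ u₀ → φ u ≠ (m:ℝ) := by
    intro u hu h hc
    apply h
    rw [← hψφ u hu, hc]
  have hφsm : StrictMonoOn φ (Ico (0:ℝ) M) := by
    intro u hu v hv huv
    have huv' : ψ (φ u) < ψ (φ v) := by rw [hψφ u hu, hψφ v hv]; exact huv
    exact (hmono.lt_iff_lt (hφ0 u hu) (hφ0 v hv)).mp huv'
  have hmemnhds : Ico (0:ℝ) M ∈ 𝓝 u₀ := Ico_mem_nhds hu₀pos hu₀M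
  have himg : φ '' (Ico (0:ℝ) M) ∈ 𝓝 (φ u₀) := by
    rw [hφψm]
    refine mem_of_superset (Ici_mem_nhds hm0) ?_
    intro x hx
    exact ⟨ψ x, hbij.mapsTo hx, hφψ x hx⟩
  have hφcont : ContinuousAt φ u₀ := hφsm.continuousAt_of_image_mem_nhds hmemnhds himg
  -- right derivative of φ
  have key_r : HasDerivWithinAt φ (b m)⁻¹ (Ici u₀) u₀ := by
    rw [hasDerivWithinAt_iff_tendsto_slope]
    have hIco : Ico (0:ℝ) M ∈ 𝓝[Ici u₀ \ {u₀}] u₀ := mem_nhdsWithin_of_mem_nhds hmemnhds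
    have hev : ∀ᶠ u in 𝓝[Ici u₀ \ {u₀}] u₀, φ u ∈ Ici (m:ℝ) \ {(m:ℝ)} := by
      filter_upwards [hIco, self_mem_nhdsWithin] with u hu1 hu2
      exact ⟨hge u hu1 hu2.1, hne u hu1 hu2.2⟩
    have hφt : Tendsto φ (𝓝[Ici u₀ \ {u₀}] u₀) (𝓝[Ici (m:ℝ) \ {(m:ℝ)}] (m:ℝ)) := by
      refine tendsto_nhdsWithin_of_tendsto_nhds_of_eventually_within _ ?_ hev
      exact hφψm ▸ (hφcont.tendsto.mono_left nhdsWithin_le_nhds)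
    have hψslope : Tendsto (slope ψ (m:ℝ)) (𝓝[Ici (m:ℝ) \ {(m:ℝ)}] (m:ℝ)) (𝓝 (b m)) :=
      hasDerivWithinAt_iff_tendsto_slope.mp (hb m)
    have htend := ((hψslope.comp hφt).inv₀ (hbpos m).ne')
    refine htend.congr' ?_
    filter_upwards [hIco, self_mem_nhdsWithin] with u hu1 hu2
    simp only [Function.comp, slope_def_field, hψφ u hu1, hφψm, inv_div, ← hu₀]
  -- left derivative of φ
  have key_l : HasDerivWithinAt φ (a m)⁻¹ (Iic u₀) u₀ := by
    rw [hasDerivWithinAt_iff_tendsto_slope]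
    have hIco : Ico (0:ℝ) M ∈ 𝓝[Iic u₀ \ {u₀}] u₀ := mem_nhdsWithin_of_mem_nhds hmemnhds
    have hev : ∀ᶠ u in 𝓝[Iic u₀ \ {u₀}] u₀, φ u ∈ Iic (m:ℝ) \ {(m:ℝ)} := by
      filter_upwards [hIco, self_mem_nhdsWithin] with u hu1 hu2
      exact ⟨hle u hu1 hu2.1, hne u hu1 hu2.2⟩
    have hφt : Tendsto φ (𝓝[Iic u₀ \ {u₀}] u₀) (𝓝[Iic (m:ℝ) \ {(m:ℝ)}] (m:ℝ)) := by
      refine tendsto_nhdsWithin_of_tendsto_nhds_of_eventually_within _ ?_ hev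
      exact hφψm ▸ (hφcont.tendsto.mono_left nhdsWithin_le_nhds)
    have hψslope : Tendsto (slope ψ (m:ℝ)) (𝓝[Iic (m:ℝ) \ {(m:ℝ)}] (m:ℝ)) (𝓝 (a m)) :=
      hasDerivWithinAt_iff_tendsto_slope.mp (ha m hm1)
    have htend := ((hψslope.comp hφt).inv₀ (hapos m hm1).ne')
    refine htend.congr' ?_
    filter_upwards [hIco, self_mem_nhdsWithin] with u hu1 hu2
    simp only [Function.comp, slope_def_field, hψφ u hu1, hφψm, inv_div, ← hu₀]
  -- right derivative of the composite
  have hd_r : HasDerivWithinAt (fun u => ψ ((α : ℝ) - φ u)) (-(a (α - m)) / b m)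
      (Ici u₀) u₀ := by
    have h1 : HasDerivWithinAt (fun u => (α:ℝ) - φ u) (-(b m)⁻¹) (Ico u₀ M) u₀ :=
      (key_r.mono Ico_subset_Ici_self).const_sub _
    have h2 : HasDerivWithinAt ψ (a (α - m)) (Iic ((α:ℝ) - (m:ℝ))) ((α:ℝ) - (m:ℝ)) := by
      have := ha (α - m) hαm1; rwa [hcast] at this
    have hmaps : MapsTo (fun u => (α:ℝ) - φ u) (Ico u₀ M) (Iic ((α:ℝ) - (m:ℝ))) := by
      intro u hu
      have := hge u ⟨le_trans hu₀pos.le hu.1, hu.2⟩ hu.1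
      simp only [mem_Iic]; linarith
    have h3 := h2.comp_of_eq u₀ h1 hmaps (by rw [hφψm])
    have h4 : HasDerivWithinAt (fun u => ψ ((α : ℝ) - φ u)) (a (α - m) * -(b m)⁻¹)
        (Ico u₀ M) u₀ := h3
    have h5 : a (α - m) * -(b m)⁻¹ = -(a (α - m)) / b m := by ring
    rw [h5] at h4
    refine h4.mono_of_mem_nhdsWithin ?_
    rw [← Ici_inter_Iio]
    exact inter_mem self_mem_nhdsWithin (mem_nhdsWithin_of_mem_nhds (Iio_mem_nhds hu₀M))
  -- left derivative of the composite
  have hd_l : HasDerivWithinAt (fun u => ψ ((α : ℝ) - φ u)) (-(b (α - m)) / a m)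
      (Iic u₀) u₀ := by
    have h1 : HasDerivWithinAt (fun u => (α:ℝ) - φ u) (-(a m)⁻¹) (Ioc 0 u₀) u₀ :=
      (key_l.mono Ioc_subset_Iic_self).const_sub _
    have h2 : HasDerivWithinAt ψ (b (α - m)) (Ici ((α:ℝ) - (m:ℝ))) ((α:ℝ) - (m:ℝ)) := by
      have := hb (α - m); rwa [hcast] at this
    have hmaps : MapsTo (fun u => (α:ℝ) - φ u) (Ioc 0 u₀) (Ici ((α:ℝ) - (m:ℝ))) := by
      intro u hu
      have := hle u ⟨hu.1.le, lt_of_le_of_lt hu.2 hu₀M⟩ hu.2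
      simp only [mem_Ici]; linarith
    have h3 := h2.comp_of_eq u₀ h1 hmaps (by rw [hφψm])
    have h4 : HasDerivWithinAt (fun u => ψ ((α : ℝ) - φ u)) (b (α - m) * -(a m)⁻¹)
        (Ioc 0 u₀) u₀ := h3
    have h5 : b (α - m) * -(a m)⁻¹ = -(b (α - m)) / a m := by ring
    rw [h5] at h4
    refine h4.mono_of_mem_nhdsWithin ?_
    rw [← Iic_inter_Ioi]
    exact inter_mem self_mem_nhdsWithin (mem_nhdsWithin_of_mem_nhds (Ioi_mem_nhds hu₀pos))
  have ham := (hapos m hm1).ne'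
  have hbm := (hbpos m).ne'
  refine ⟨hd_r, hd_l, ?_, ?_⟩
  · intro h
    have hud := h.hasDerivAt
    have e1 : -(a (α - m)) / b m = deriv (fun u => ψ ((α : ℝ) - φ u)) u₀ :=
      (uniqueDiffOn_Ici u₀ u₀ Set.self_mem_Ici).eq_deriv _ hd_r hud.hasDerivWithinAt
    have e2 : -(b (α - m)) / a m = deriv (fun u => ψ ((α : ℝ) - φ u)) u₀ :=
      (uniqueDiffOn_Iic u₀ u₀ Set.self_mem_Iic).eq_deriv _ hd_l hud.hasDerivWithinAt
    have e3 : -(a (α - m)) / b m = -(b (α - m)) / a m := e1.trans e2.symm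
    field_simp at e3
    linarith
  · intro heq
    have e3 : -(b (α - m)) / a m = -(a (α - m)) / b m := by
      field_simp
      linarith
    rw [e3] at hd_l
    have := hd_l.union hd_r
    rw [Set.Iic_union_Ici] at this
    exact (hasDerivWithinAt_univ.mp this).differentiableAt
end

section
/- Let ψ be an ℝ⁺ coding function and α ∈ ℕ, α ≥ 2. Then ψ identifies natural numbers in [0, ψ(α)] (i.e. for all u in the open interval (0, ψ(α)), f̂_α is non-differentiable at u if and only if ψ⁻¹(u) ∈ ℕ) if and only if a_m · a_{α−m} ≠ b_m · b_{α−m} for all m = 1, …, α−1. -/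
open Set Filter Topology

/-- One-sided/within inverse function derivative. -/
lemma inv_hasDerivWithinAt {ψ φ : ℝ → ℝ} {s t : Set ℝ} {x₀ u₀ c : ℝ}
    (hc : c ≠ 0) (hd : HasDerivWithinAt ψ c t x₀)
    (hφc : ContinuousWithinAt φ s u₀)
    (hmaps : Set.MapsTo φ s t)
    (hinv : ∀ v ∈ s, ψ (φ v) = v)
    (hu : u₀ ∈ s) (hx : φ u₀ = x₀) :
    HasDerivWithinAt φ c⁻¹ s u₀ := by
  have hψx : ψ x₀ = u₀ := by rw [← hx, hinv u₀ hu]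
  rw [hasDerivWithinAt_iff_tendsto_slope] at hd ⊢
  have hmaps' : Set.MapsTo φ (s \ {u₀}) (t \ {x₀}) := by
    intro v hv
    refine ⟨hmaps hv.1, ?_⟩
    intro h
    apply hv.2
    have hveq : v = u₀ := by
      rw [← hinv v hv.1]
      simp only [Set.mem_singleton_iff] at h
      rw [h, hψx]
    simp [hveq]
  have h1 : Tendsto φ (𝓝[s \ {u₀}] u₀) (𝓝[t \ {x₀}] x₀) := by
    have := (hφc.mono Set.diff_subset).tendsto_nhdsWithin hmaps'
    rwa [hx] at this
  have h2 := (hd.comp h1).inv₀ hc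
  refine h2.congr' ?_
  filter_upwards [self_mem_nhdsWithin] with v hv
  show (slope ψ x₀ (φ v))⁻¹ = slope φ u₀ v
  rw [slope_def_field, slope_def_field, hinv v hv.1, hψx, hx, inv_div]

/-- ψ identifies natural numbers in [0, ψ(α)] (f̂_α non-differentiable at u
iff ψ⁻¹(u) ∈ ℕ, for u ∈ (0, ψ(α))) iff a_m·a_{α−m} ≠ b_m·b_{α−m} for all
m = 1, …, α−1. -/
theorem identifies_naturals_iff
    (ψ φ : ℝ → ℝ) (M : ℝ) (a b : ℕ → ℝ)
    (hψ0 : ψ 0 = 0)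
    (hmono : StrictMonoOn ψ (Set.Ici 0))
    (hcont : ContinuousOn ψ (Set.Ici 0))
    (hC1 : ∀ m : ℕ, ContDiffOn ℝ 1 ψ (Set.Icc (m : ℝ) (m + 1)))
    (hpos : ∀ m : ℕ, ∀ x ∈ Set.Icc (m : ℝ) (m + 1),
      0 < derivWithin ψ (Set.Icc (m : ℝ) (m + 1)) x)
    (hbij : Set.BijOn ψ (Set.Ici 0) (Set.Ico 0 M))
    (hφψ : ∀ x ∈ Set.Ici (0:ℝ), φ (ψ x) = x)
    (hψφ : ∀ u ∈ Set.Ico (0:ℝ) M, ψ (φ u) = u)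
    (ha : ∀ k : ℕ, 1 ≤ k → HasDerivWithinAt ψ (a k) (Set.Iic (k : ℝ)) (k : ℝ))
    (hb : ∀ k : ℕ, HasDerivWithinAt ψ (b k) (Set.Ici (k : ℝ)) (k : ℝ))
    (α : ℕ) (hα : 2 ≤ α) :
    (∀ u ∈ Set.Ioo (0 : ℝ) (ψ α),
        (¬ DifferentiableAt ℝ (fun v => ψ ((α : ℝ) - φ v)) u ↔ ∃ n : ℕ, φ u = n))
      ↔
    (∀ m : ℕ, 1 ≤ m → m ≤ α - 1 → a m * a (α - m) ≠ b m * b (α - m)) := by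
  have hψα_lt_M : ψ (α:ℝ) < M := (hbij.mapsTo (Set.mem_Ici.mpr (Nat.cast_nonneg α))).2
  have hψnn : ∀ x : ℝ, 0 ≤ x → ψ x ∈ Set.Ico 0 M := fun x hx => hbij.mapsTo hx
  have hψlt : ∀ x y : ℝ, 0 ≤ x → 0 ≤ y → x < y → ψ x < ψ y := fun x y hx hy h => hmono hx hy h
  have hφ_mem : ∀ u ∈ Set.Ico (0:ℝ) M, 0 ≤ φ u := by
    intro u hu
    obtain ⟨x, hx, rfl⟩ := hbij.surjOn hu
    rw [hφψ x hx]; exact hx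
  have key_lt : ∀ u ∈ Set.Ico (0:ℝ) M, ∀ x : ℝ, 0 ≤ x → (u < ψ x ↔ φ u < x) := by
    intro u hu x hx
    conv_lhs => rw [← hψφ u hu]
    exact hmono.lt_iff_lt (hφ_mem u hu) hx
  have key_le : ∀ u ∈ Set.Ico (0:ℝ) M, ∀ x : ℝ, 0 ≤ x → (u ≤ ψ x ↔ φ u ≤ x) := by
    intro u hu x hx
    conv_lhs => rw [← hψφ u hu]
    exact hmono.le_iff_le (hφ_mem u hu) hx
  -- continuity of φ on (0, M)
  have hφcont : ∀ u₀ : ℝ, 0 < u₀ → u₀ < M → ContinuousAt φ u₀ := by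
    intro u₀ h0 hM
    have hsub : Set.Ioo (0:ℝ) M ⊆ Set.Ico 0 M := fun v hv => ⟨hv.1.le, hv.2⟩
    have hφ0 : 0 < φ u₀ := by
      rcases lt_or_eq_of_le (hφ_mem u₀ ⟨h0.le, hM⟩) with h | h
      · exact h
      · exfalso
        have := hψφ u₀ ⟨h0.le, hM⟩
        rw [← h, hψ0] at this
        linarith
    apply StrictMonoOn.continuousAt_of_image_mem_nhds (s := Set.Ioo (0:ℝ) M)
    · intro u hu v hv huv
      have hv' := hsub hv
      rw [← key_lt u (hsub hu) (φ v) (hφ_mem v hv'), hψφ v hv']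
      exact huv
    · exact isOpen_Ioo.mem_nhds ⟨h0, hM⟩
    · apply Filter.mem_of_superset (isOpen_Ioi.mem_nhds hφ0)
      intro x hx
      have hx' : (0:ℝ) ≤ x := le_of_lt hx
      refine ⟨ψ x, ⟨?_, (hψnn x hx').2⟩, hφψ x hx'⟩
      rw [← hψ0]
      exact hψlt 0 x le_rfl hx' hx
  -- positivity of b
  have hbpos : ∀ k : ℕ, 0 < b k := by
    intro k
    have hk1 : (k:ℝ) < k + 1 := by linarith
    have hmem : (k:ℝ) ∈ Set.Icc (k:ℝ) (k+1) := ⟨le_rfl, hk1.le⟩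
    have h := (hb k).mono (Set.Icc_subset_Ici_self : Set.Icc (k:ℝ) (k+1) ⊆ Set.Ici k)
    have := h.derivWithin ((uniqueDiffOn_Icc hk1) _ hmem)
    rw [← this]
    exact hpos k k hmem
  have hapos : ∀ k : ℕ, 1 ≤ k → 0 < a k := by
    intro k hk
    obtain ⟨j, rfl⟩ : ∃ j, k = j + 1 := ⟨k - 1, by omega⟩
    have hk1 : (j:ℝ) < j + 1 := by linarith
    have hmem : ((j:ℝ)) + 1 ∈ Set.Icc (j:ℝ) (j+1) := ⟨by linarith, le_rfl⟩
    have hsub : Set.Icc (j:ℝ) (j+1) ⊆ Set.Iic ((j+1:ℕ):ℝ) := by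
      intro x hx
      simp only [Set.mem_Iic]
      push_cast
      exact hx.2
    have h := (ha (j+1) (by omega)).mono hsub
    have hcast : ((j+1:ℕ):ℝ) = (j:ℝ) + 1 := by push_cast; ring
    rw [hcast] at h
    have := h.derivWithin ((uniqueDiffOn_Icc hk1) _ hmem)
    rw [← this]
    exact hpos j ((j:ℝ)+1) hmem
  have hψαpos : 0 < ψ (α:ℝ) := by
    rw [← hψ0]
    refine hψlt 0 α le_rfl (by positivity) ?_
    have : 0 < α := by omega
    exact_mod_cast this
  -- differentiability characterization at integer points
  have main : ∀ m : ℕ, 1 ≤ m → m + 1 ≤ α →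
      (DifferentiableAt ℝ (fun v => ψ ((α : ℝ) - φ v)) (ψ (m:ℝ)) ↔
        a m * a (α - m) = b m * b (α - m)) := by
    intro m hm1 hmα
    have hmR0 : (0:ℝ) ≤ (m:ℝ) := Nat.cast_nonneg m
    have hmRpos : (0:ℝ) < (m:ℝ) := by exact_mod_cast hm1
    have hmRα : (m:ℝ) < (α:ℝ) := by exact_mod_cast Nat.lt_of_lt_of_le (Nat.lt_succ_self m) hmα
    have hm1α : (m:ℝ) + 1 ≤ (α:ℝ) := by exact_mod_cast hmα
    set u₀ := ψ (m:ℝ) with hu₀def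
    have hu₀pos : 0 < u₀ := by rw [hu₀def, ← hψ0]; exact hψlt 0 m le_rfl hmR0 hmRpos
    have hu₀M : u₀ < M := (hψnn (m:ℝ) hmR0).2
    have hφu₀ : φ u₀ = (m:ℝ) := hφψ (m:ℝ) hmR0
    have hcast : ((α - m : ℕ) : ℝ) = (α:ℝ) - m := by rw [Nat.cast_sub (by omega)]
    have ham1 : 1 ≤ α - m := by omega
    have hcontφ : ContinuousAt φ u₀ := hφcont u₀ hu₀pos hu₀M
    -- right-sided derivative of F at u₀
    have hψm1M : ψ ((m:ℝ)+1) ≤ M := (hψnn _ (by linarith)).2.le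
    have hu₀lt1 : u₀ < ψ ((m:ℝ)+1) := hψlt _ _ hmR0 (by linarith) (by linarith)
    set sR := Set.Ico u₀ (ψ ((m:ℝ)+1)) with hsRdef
    have hsRsub : sR ⊆ Set.Ico (0:ℝ) M := fun v hv =>
      ⟨le_trans hu₀pos.le hv.1, lt_of_lt_of_le hv.2 hψm1M⟩
    have hφR : HasDerivWithinAt φ (b m)⁻¹ sR u₀ := by
      apply inv_hasDerivWithinAt (ne_of_gt (hbpos m)) (hb m)
        hcontφ.continuousWithinAt ?_ (fun v hv => hψφ v (hsRsub hv))
        ⟨le_rfl, hu₀lt1⟩ hφu₀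
      intro v hv
      have hv' := hsRsub hv
      simp only [Set.mem_Ici]
      by_contra h
      push_neg at h
      rw [← key_lt v hv' (m:ℝ) hmR0] at h
      exact absurd hv.1 (not_le.mpr h)
    have hgR : HasDerivWithinAt (fun v => (α:ℝ) - φ v) (-(b m)⁻¹) sR u₀ :=
      hφR.const_sub (α:ℝ)
    have hψaR : HasDerivWithinAt ψ (a (α - m)) (Set.Iic ((α:ℝ) - m)) ((α:ℝ) - m) := by
      have := ha (α - m) ham1
      rwa [hcast] at this
    have hψaR' : HasDerivWithinAt ψ (a (α - m)) (Set.Iic ((α:ℝ) - m)) ((α:ℝ) - φ u₀) := by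
      rw [hφu₀]; exact hψaR
    have hFR : HasDerivWithinAt (fun v => ψ ((α:ℝ) - φ v))
        (a (α - m) * -(b m)⁻¹) sR u₀ := by
      refine HasDerivWithinAt.comp (𝕜 := ℝ) u₀ hψaR' hgR ?_
      intro v hv
      have hv' := hsRsub hv
      simp only [Set.mem_Iic]
      have : (m:ℝ) ≤ φ v := by
        by_contra h
        push_neg at h
        rw [← key_lt v hv' (m:ℝ) hmR0] at h
        exact absurd hv.1 (not_le.mpr h)
      linarith
    have hFR' : HasDerivWithinAt (fun v => ψ ((α:ℝ) - φ v))
        (a (α - m) * -(b m)⁻¹) (Set.Ici u₀) u₀ := by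
      apply hFR.mono_of_mem_nhdsWithin
      rw [hsRdef, ← Set.Ici_inter_Iio]
      exact Filter.inter_mem self_mem_nhdsWithin
        (mem_nhdsWithin_of_mem_nhds (isOpen_Iio.mem_nhds hu₀lt1))
    -- left-sided derivative of F at u₀
    have hm10 : (0:ℝ) ≤ (m:ℝ) - 1 := by
      have : (1:ℝ) ≤ (m:ℝ) := by exact_mod_cast hm1
      linarith
    have hψm1lt : ψ ((m:ℝ)-1) < u₀ := hψlt _ _ hm10 hmR0 (by linarith)
    set sL := Set.Ioc (ψ ((m:ℝ)-1)) u₀ with hsLdef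
    have hψm1nn : 0 ≤ ψ ((m:ℝ)-1) := (hψnn _ hm10).1
    have hsLsub : sL ⊆ Set.Ico (0:ℝ) M := fun v hv =>
      ⟨le_trans hψm1nn hv.1.le, lt_of_le_of_lt hv.2 hu₀M⟩
    have hφL : HasDerivWithinAt φ (a m)⁻¹ sL u₀ := by
      apply inv_hasDerivWithinAt (ne_of_gt (hapos m hm1)) (ha m hm1)
        hcontφ.continuousWithinAt ?_ (fun v hv => hψφ v (hsLsub hv))
        ⟨hψm1lt, le_rfl⟩ hφu₀
      intro v hv
      have hv' := hsLsub hv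
      simp only [Set.mem_Iic]
      rw [← key_le v hv' (m:ℝ) hmR0]
      exact hv.2
    have hgL : HasDerivWithinAt (fun v => (α:ℝ) - φ v) (-(a m)⁻¹) sL u₀ :=
      hφL.const_sub (α:ℝ)
    have hψbL : HasDerivWithinAt ψ (b (α - m)) (Set.Ici ((α:ℝ) - m)) ((α:ℝ) - m) := by
      have := hb (α - m)
      rwa [hcast] at this
    have hψbL' : HasDerivWithinAt ψ (b (α - m)) (Set.Ici ((α:ℝ) - m)) ((α:ℝ) - φ u₀) := by
      rw [hφu₀]; exact hψbL
    have hFL : HasDerivWithinAt (fun v => ψ ((α:ℝ) - φ v))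
        (b (α - m) * -(a m)⁻¹) sL u₀ := by
      refine HasDerivWithinAt.comp (𝕜 := ℝ) u₀ hψbL' hgL ?_
      intro v hv
      have hv' := hsLsub hv
      simp only [Set.mem_Ici]
      have : φ v ≤ (m:ℝ) := by
        rw [← key_le v hv' (m:ℝ) hmR0]
        exact hv.2
      linarith
    have hFL' : HasDerivWithinAt (fun v => ψ ((α:ℝ) - φ v))
        (b (α - m) * -(a m)⁻¹) (Set.Iic u₀) u₀ := by
      apply hFL.mono_of_mem_nhdsWithin
      rw [hsLdef, ← Set.Ioi_inter_Iic]
      rw [Set.inter_comm]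
      exact Filter.inter_mem self_mem_nhdsWithin
        (mem_nhdsWithin_of_mem_nhds (isOpen_Ioi.mem_nhds hψm1lt))
    have hbm := hbpos m
    have ham := hapos m hm1
    constructor
    · intro hdiff
      have hd := hdiff.hasDerivAt
      have e1 : derivWithin (fun v => ψ ((α:ℝ) - φ v)) (Set.Ici u₀) u₀
          = a (α - m) * -(b m)⁻¹ :=
        hFR'.derivWithin ((uniqueDiffOn_Ici u₀) u₀ Set.self_mem_Ici)
      have e1' : derivWithin (fun v => ψ ((α:ℝ) - φ v)) (Set.Ici u₀) u₀
          = deriv (fun v => ψ ((α:ℝ) - φ v)) u₀ :=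
        hd.hasDerivWithinAt.derivWithin ((uniqueDiffOn_Ici u₀) u₀ Set.self_mem_Ici)
      have e2 : derivWithin (fun v => ψ ((α:ℝ) - φ v)) (Set.Iic u₀) u₀
          = b (α - m) * -(a m)⁻¹ :=
        hFL'.derivWithin ((uniqueDiffOn_Iic u₀) u₀ Set.self_mem_Iic)
      have e2' : derivWithin (fun v => ψ ((α:ℝ) - φ v)) (Set.Iic u₀) u₀
          = deriv (fun v => ψ ((α:ℝ) - φ v)) u₀ :=
        hd.hasDerivWithinAt.derivWithin ((uniqueDiffOn_Iic u₀) u₀ Set.self_mem_Iic)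
      have heq : a (α - m) * -(b m)⁻¹ = b (α - m) * -(a m)⁻¹ := by
        rw [← e1, e1', ← e2', e2]
      field_simp at heq
      linarith
    · intro heq
      have hvals : b (α - m) * -(a m)⁻¹ = a (α - m) * -(b m)⁻¹ := by
        field_simp
        linarith
      rw [hvals] at hFL'
      have := hFL'.union hFR'
      rw [Set.Iic_union_Ici] at this
      rw [hasDerivWithinAt_univ] at this
      exact this.differentiableAt
  -- ψ is differentiable at non-integer points of (0, α)
  have hψderiv : ∀ y : ℝ, 0 < y → (∀ n : ℕ, (n:ℝ) ≠ y) → ∃ c, 0 < c ∧ HasDerivAt ψ c y := by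
    intro y hy0 hyn
    set k := ⌊y⌋₊ with hkdef
    have hk1 : (k:ℝ) < y := lt_of_le_of_ne (Nat.floor_le hy0.le) (hyn k)
    have hk2 : y < (k:ℝ) + 1 := by
      have := Nat.lt_floor_add_one y
      exact_mod_cast this
    have hInhds : Set.Icc (k:ℝ) (k+1) ∈ 𝓝 y := Icc_mem_nhds hk1 hk2
    have hymem : y ∈ Set.Icc (k:ℝ) (k+1) := ⟨hk1.le, hk2.le⟩
    have hdW : DifferentiableWithinAt ℝ ψ (Set.Icc (k:ℝ) (k+1)) y :=
      ((hC1 k).differentiableOn one_ne_zero) y hymem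
    have hdiff : DifferentiableAt ℝ ψ y := hdW.differentiableAt hInhds
    refine ⟨deriv ψ y, ?_, hdiff.hasDerivAt⟩
    have := hpos k y hymem
    rwa [derivWithin_of_mem_nhds hInhds] at this
  -- φ(u) bounds
  have hφbounds : ∀ u ∈ Set.Ioo (0:ℝ) (ψ (α:ℝ)), 0 < φ u ∧ φ u < (α:ℝ) := by
    intro u hu
    have huM : u ∈ Set.Ico (0:ℝ) M := ⟨hu.1.le, lt_trans hu.2 hψα_lt_M⟩
    constructor
    · rcases lt_or_eq_of_le (hφ_mem u huM) with h | h
      · exact h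
      · exfalso
        have := hψφ u huM
        rw [← h, hψ0] at this
        linarith [hu.1]
    · rw [← key_lt u huM (α:ℝ) (by positivity)]
      exact hu.2
  -- differentiability at non-integer points
  have diff_noninteger : ∀ u ∈ Set.Ioo (0:ℝ) (ψ (α:ℝ)), (¬ ∃ n : ℕ, φ u = n) →
      DifferentiableAt ℝ (fun v => ψ ((α : ℝ) - φ v)) u := by
    intro u hu hnot
    push_neg at hnot
    have huM : u ∈ Set.Ico (0:ℝ) M := ⟨hu.1.le, lt_trans hu.2 hψα_lt_M⟩
    obtain ⟨hx0, hxα⟩ := hφbounds u hu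
    obtain ⟨c, hc, hdc⟩ := hψderiv (φ u) hx0 (fun n h => hnot n h.symm)
    have hnot2 : ∀ n : ℕ, (n:ℝ) ≠ (α:ℝ) - φ u := by
      intro n h
      have hnα : n < α := by
        by_contra hcon
        push_neg at hcon
        have : (α:ℝ) ≤ (n:ℝ) := by exact_mod_cast hcon
        linarith
      apply hnot (α - n)
      have : ((α - n : ℕ):ℝ) = (α:ℝ) - n := by rw [Nat.cast_sub hnα.le]
      rw [this, h]
      ring
    obtain ⟨c', hc', hdc'⟩ := hψderiv ((α:ℝ) - φ u) (by linarith) hnot2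
    -- φ has derivative c⁻¹ at u
    have hφd : HasDerivAt φ c⁻¹ u := by
      have hW : HasDerivWithinAt φ c⁻¹ (Set.Ioo (0:ℝ) M) u := by
        refine inv_hasDerivWithinAt (t := Set.univ) (ne_of_gt hc) hdc.hasDerivWithinAt
          ((hφcont u hu.1 huM.2).continuousWithinAt) (Set.mapsTo_univ _ _)
          (fun v hv => hψφ v ⟨hv.1.le, hv.2⟩) ⟨hu.1, huM.2⟩ rfl
      exact hW.hasDerivAt (isOpen_Ioo.mem_nhds ⟨hu.1, huM.2⟩)
    have hgd : HasDerivAt (fun v => (α:ℝ) - φ v) (-c⁻¹) u := hφd.const_sub (α:ℝ)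
    have : HasDerivAt (fun v => ψ ((α:ℝ) - φ v)) (c' * -c⁻¹) u :=
      HasDerivAt.comp u hdc' hgd
    exact this.differentiableAt
  -- assemble
  constructor
  · intro H m hm1 hm2 heq
    have hmα : m + 1 ≤ α := by omega
    have hmRα : (m:ℝ) < (α:ℝ) := by exact_mod_cast Nat.lt_of_lt_of_le (Nat.lt_succ_self m) hmα
    have hmR0 : (0:ℝ) ≤ (m:ℝ) := Nat.cast_nonneg m
    have hmRpos : (0:ℝ) < (m:ℝ) := by exact_mod_cast hm1
    have hmem : ψ (m:ℝ) ∈ Set.Ioo (0:ℝ) (ψ (α:ℝ)) := by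
      constructor
      · rw [← hψ0]; exact hψlt 0 m le_rfl hmR0 hmRpos
      · exact hψlt _ _ hmR0 (by positivity) hmRα
    have hndiff := (H (ψ (m:ℝ)) hmem).mpr ⟨m, hφψ (m:ℝ) hmR0⟩
    exact hndiff ((main m hm1 hmα).mpr heq)
  · intro H u hu
    constructor
    · intro hndiff
      by_contra hnot
      exact hndiff (diff_noninteger u hu hnot)
    · rintro ⟨n, hn⟩ hdiff
      obtain ⟨hx0, hxα⟩ := hφbounds u hu
      rw [hn] at hx0 hxα
      have hn1 : 1 ≤ n := by exact_mod_cast Nat.one_le_iff_ne_zero.mpr (by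
        intro h; rw [h] at hx0; simp at hx0)
      have hnα : n < α := by exact_mod_cast hxα
      have hueq : u = ψ (n:ℝ) := by
        rw [← hψφ u ⟨hu.1.le, lt_trans hu.2 hψα_lt_M⟩, hn]
      rw [hueq] at hdiff
      exact H n hn1 (by omega) ((main n hn1 (by omega)).mp hdiff)
end

section
/- Let α ≥ 16 be even and define x_{k₀} for k₀ ∈ {4, …, α/2 − 1} as the lower essential polynomial values of a strictly increasing positive coefficient sequence (ξ_i). Then x_4 ≤ x_5 ≤ ⋯ ≤ x_{α/2−1}, all x_{k₀} > 0, and x_{k₀−1} = x_{k₀} if and only if k₀ is prime (for 5 ≤ k₀ ≤ α/2 − 1). -/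
/-!
Put `Δ n = ξ n - ξ (n - 1)` for `n ≥ 2`, with `ξ₁ = 0`, and `Δ 1 = 0`. Summation by parts turns
the defining formula of `x_k` into `∑_{d ≤ √k} Δ d ξ_{⌊k/d⌋} - ξ_{⌊√k⌋}² / 2`, which by the
Dirichlet hyperbola method is half the lattice sum `∑_{d e ≤ k} Δ d Δ e = ∑_{n ≤ k} (Δ ⋆ Δ) n`.
Hence `x_k - x_{k-1} = (Δ ⋆ Δ)(k) / 2`, a sum of the products `Δ d Δ e > 0` over the
factorisations `k = d e` with `d, e ≥ 2`: it is nonnegative, and zero exactly when `k` is prime.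
-/

open Finset

theorem Finset.sum_Ioc_sub_mul_eq_sum_range {R : Type*} [Ring R] (c a : ℕ → R) (hc : c 0 = 0)
    (s : ℕ) :
    ∑ d ∈ Ioc 0 s, (c d - c (d - 1)) * a d =
      ∑ n ∈ range s, c n * (a n - a (n + 1)) + c s * a s := by
  induction s with
  | zero => simp [hc]
  | succ s ih =>
    rw [sum_Ioc_succ_top (Nat.zero_le s), ih, sum_range_succ, Nat.add_sub_cancel]
    noncomm_ring

namespace ArithmeticFunction

theorem sum_Ioc_mul_eq_hyperbola {R : Type*} [CommRing R] (f g : ArithmeticFunction R) (N : ℕ) :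
    ∑ n ∈ Ioc 0 N, (f * g) n =
      ∑ d ∈ Ioc 0 N.sqrt, f d * ∑ m ∈ Ioc 0 (N / d), g m +
        ∑ d ∈ Ioc 0 N.sqrt, g d * ∑ m ∈ Ioc 0 (N / d), f m -
          (∑ d ∈ Ioc 0 N.sqrt, f d) * ∑ d ∈ Ioc 0 N.sqrt, g d := by
  rw [sum_Ioc_mul_eq_sum_prod_filter, eq_sub_iff_add_eq]
  set s := N.sqrt
  have hs : s * s ≤ N := Nat.sqrt_le N
  have hs' : N < (s + 1) * (s + 1) := Nat.lt_succ_sqrt N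
  set A := {p ∈ Ioc 0 N ×ˢ Ioc 0 N | p.1 * p.2 ≤ N}
  have hmemA : ∀ d m, (d, m) ∈ A ↔ 0 < d ∧ 0 < m ∧ d * m ≤ N := by
    intro d m
    simp only [A, mem_filter, mem_product, mem_Ioc]
    have := @Nat.le_mul_of_pos_left m d
    have := @Nat.le_mul_of_pos_right d m
    grind
  have hcover : {p ∈ A | p.1 ≤ s} ∪ {p ∈ A | p.2 ≤ s} = A := by
    rw [← filter_or]
    refine filter_true_of_mem fun ⟨d, m⟩ hp => ?_
    rw [hmemA] at hp
    by_contra! h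
    nlinarith [h.1, h.2, hp.2]
  have hcorner : {p ∈ A | p.1 ≤ s} ∩ {p ∈ A | p.2 ≤ s} = Ioc 0 s ×ˢ Ioc 0 s := by
    ext ⟨d, m⟩
    simp only [mem_inter, mem_filter, hmemA, mem_product, mem_Ioc]
    have := fun (hd : d ≤ s) (hm : m ≤ s) => (Nat.mul_le_mul hd hm).trans hs
    grind
  have hleft : ∀ p : ℕ × ℕ, p ∈ {p ∈ A | p.1 ≤ s} ↔ p.1 ∈ Ioc 0 s ∧ p.2 ∈ Ioc 0 (N / p.1) := by
    rintro ⟨d, m⟩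
    simp only [mem_filter, hmemA, mem_Ioc]
    have := @Nat.le_div_iff_mul_le d m N
    grind
  have hright : ∀ p : ℕ × ℕ, p ∈ {p ∈ A | p.2 ≤ s} ↔ p.2 ∈ Ioc 0 s ∧ p.1 ∈ Ioc 0 (N / p.2) := by
    rintro ⟨d, m⟩
    simp only [mem_filter, hmemA, mem_Ioc]
    have := @Nat.le_div_iff_mul_le m d N
    grind
  rw [← hcover, sum_mul_sum, ← sum_product', ← hcorner, sum_union_inter,
    sum_finset_product _ _ (fun d => Ioc 0 (N / d)) hleft,
    sum_finset_product_right _ _ (fun d => Ioc 0 (N / d)) hright]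
  simp only [mul_sum, mul_comm]

theorem mul_apply_nonneg {R : Type*} [Semiring R] [PartialOrder R] [IsOrderedRing R]
    {f g : ArithmeticFunction R} (hf : ∀ n, 0 ≤ f n) (hg : ∀ n, 0 ≤ g n) (n : ℕ) :
    0 ≤ (f * g) n := by
  rw [mul_apply]
  exact sum_nonneg fun _ _ => mul_nonneg (hf _) (hg _)

theorem mul_apply_eq_zero_iff_prime {R : Type*} [Semiring R] [PartialOrder R]
    [IsStrictOrderedRing R] {f g : ArithmeticFunction R} (hf : ∀ n, 0 ≤ f n) (hg : ∀ n, 0 ≤ g n)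
    (hf₁ : f 1 = 0) (hg₁ : g 1 = 0) (hf₂ : ∀ n, 2 ≤ n → f n ≠ 0) (hg₂ : ∀ n, 2 ≤ n → g n ≠ 0)
    {n : ℕ} (hn : 2 ≤ n) : (f * g) n = 0 ↔ n.Prime := by
  rw [mul_apply, sum_eq_zero_iff_of_nonneg fun _ _ => mul_nonneg (hf _) (hg _), ← not_iff_not,
    Nat.not_prime_iff_exists_mul_eq hn]
  push Not
  constructor
  · rintro ⟨⟨a, b⟩, hab, hne⟩
    obtain ⟨hab, hn0⟩ := Nat.mem_divisorsAntidiagonal.1 hab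
    dsimp only at hab hne
    have ha : 2 ≤ a := by
      rcases a with _ | _ | a <;> simp_all
    have hb : 2 ≤ b := by
      rcases b with _ | _ | b <;> simp_all
    exact ⟨a, b, by nlinarith, by nlinarith, hab⟩
  · rintro ⟨a, b, ha, hb, hab⟩
    have ha2 : 2 ≤ a := by
      rcases a with _ | _ | a <;> simp_all
    have hb2 : 2 ≤ b := by
      rcases b with _ | _ | b <;> simp_all
    refine ⟨(a, b), Nat.mem_divisorsAntidiagonal.2 ⟨hab, by omega⟩, (mul_pos ?_ ?_).ne'⟩
    · exact (hf a).lt_of_ne' (hf₂ a ha2)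
    · exact (hg b).lt_of_ne' (hg₂ b hb2)

end ArithmeticFunction

open ArithmeticFunction

section LowerEssential

variable (ξ : ℕ → ℝ)

/-- The coefficients `ξ₂ < ξ₃ < ⋯`, padded with `ξ₀ = ξ₁ = 0`. -/
def paddedCoeff (n : ℕ) : ℝ := if n < 2 then 0 else ξ n

def coeffIncrement : ArithmeticFunction ℝ :=
  ⟨fun n => paddedCoeff ξ n - paddedCoeff ξ (n - 1), sub_self _⟩

noncomputable def lowerEssentialValue (k₀ : ℕ) : ℝ :=
  (∑ n ∈ Finset.Ico 2 (Nat.sqrt k₀), ξ n * (ξ (k₀ / n) - ξ (k₀ / (n + 1)))) +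
      (if Nat.sqrt k₀ = k₀ / Nat.sqrt k₀ then (1/2) * ξ (Nat.sqrt k₀) ^ 2
       else ξ (Nat.sqrt k₀) * (ξ (k₀ / Nat.sqrt k₀) - (1/2) * ξ (Nat.sqrt k₀)))

variable {ξ}

theorem paddedCoeff_of_two_le {n : ℕ} (hn : 2 ≤ n) : paddedCoeff ξ n = ξ n :=
  if_neg (by omega)

theorem coeffIncrement_apply (n : ℕ) :
    coeffIncrement ξ n = paddedCoeff ξ n - paddedCoeff ξ (n - 1) := rfl

theorem coeffIncrement_one : coeffIncrement ξ 1 = 0 := by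
  simp [coeffIncrement_apply, paddedCoeff]

theorem coeffIncrement_pos (h₂ : 0 < ξ 2) (hξ : StrictMono ξ) {n : ℕ} (hn : 2 ≤ n) :
    0 < coeffIncrement ξ n := by
  rw [coeffIncrement_apply, paddedCoeff_of_two_le hn]
  obtain rfl | hn := hn.eq_or_lt
  · simpa [paddedCoeff] using h₂
  · rw [paddedCoeff_of_two_le (by omega), sub_pos]
    exact hξ (by omega)

theorem coeffIncrement_nonneg (h₂ : 0 < ξ 2) (hξ : StrictMono ξ) (n : ℕ) :
    0 ≤ coeffIncrement ξ n := by
  rcases n with _ | _ | n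
  · simp
  · exact coeffIncrement_one.ge
  · exact (coeffIncrement_pos h₂ hξ (by omega)).le

theorem sum_Ioc_coeffIncrement (m : ℕ) :
    ∑ n ∈ Ioc 0 m, coeffIncrement ξ n = paddedCoeff ξ m := by
  induction m with
  | zero => simp [paddedCoeff]
  | succ m ih =>
    rw [sum_Ioc_succ_top (Nat.zero_le m), ih, coeffIncrement_apply, Nat.add_sub_cancel]
    ring

theorem lowerEssentialValue_eq_half_sum {k : ℕ} (hk : 4 ≤ k) :
    lowerEssentialValue ξ k = 1 / 2 * ∑ n ∈ Ioc 0 k, (coeffIncrement ξ * coeffIncrement ξ) n := by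
  set s := k.sqrt
  have hs : 2 ≤ s := Nat.le_sqrt.2 (by omega)
  have hdiv : ∀ d, 0 < d → d ≤ s → s ≤ k / d := fun d hd hds =>
    (Nat.le_div_iff_mul_le hd).2 ((Nat.mul_le_mul_left s hds).trans (Nat.sqrt_le k))
  have hparts : ∑ d ∈ Ioc 0 s, coeffIncrement ξ d * paddedCoeff ξ (k / d) =
      ∑ n ∈ Ico 2 s, ξ n * (ξ (k / n) - ξ (k / (n + 1))) + ξ s * ξ (k / s) := by
    simp only [coeffIncrement_apply]
    rw [sum_Ioc_sub_mul_eq_sum_range _ _ (by simp [paddedCoeff]), range_eq_Ico,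
      ← sum_Ico_consecutive _ (Nat.zero_le 2) hs,
      sum_eq_zero fun n hn => by simp [paddedCoeff, (mem_Ico.1 hn).2], zero_add,
      paddedCoeff_of_two_le hs, paddedCoeff_of_two_le (hs.trans (hdiv s (by omega) le_rfl))]
    refine congrArg (· + _) (sum_congr rfl fun n hn => ?_)
    obtain ⟨hn, hns⟩ := mem_Ico.1 hn
    rw [paddedCoeff_of_two_le hn, paddedCoeff_of_two_le (hs.trans (hdiv n (by omega) hns.le)),
      paddedCoeff_of_two_le (hs.trans (hdiv (n + 1) (by omega) hns))]
  rw [sum_Ioc_mul_eq_hyperbola, lowerEssentialValue]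
  simp only [sum_Ioc_coeffIncrement]
  rw [hparts, paddedCoeff_of_two_le hs]
  split_ifs with h
  · rw [← h]; ring
  · ring

theorem lowerEssentialValue_sub_pred {k : ℕ} (hk : 5 ≤ k) :
    lowerEssentialValue ξ k - lowerEssentialValue ξ (k - 1) =
      1 / 2 * (coeffIncrement ξ * coeffIncrement ξ) k := by
  obtain ⟨j, rfl⟩ : ∃ j, k = j + 1 := ⟨k - 1, by omega⟩
  rw [lowerEssentialValue_eq_half_sum (by omega), Nat.add_sub_cancel,
    lowerEssentialValue_eq_half_sum (by omega), sum_Ioc_succ_top (Nat.zero_le j)]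
  ring

end LowerEssential

theorem lower_essential_polynomial_monotone_general
    (α : ℕ)
    (ξ : ℕ → ℝ) (hpos : 0 < ξ 0) (hmono : StrictMono ξ)
    (x : ℕ → ℝ)
    (hx : ∀ k₀ : ℕ, x k₀ =
      (∑ n ∈ Finset.Ico 2 (Nat.sqrt k₀), ξ n * (ξ (k₀ / n) - ξ (k₀ / (n + 1)))) +
      (if Nat.sqrt k₀ = k₀ / Nat.sqrt k₀ then (1/2) * ξ (Nat.sqrt k₀) ^ 2
       else ξ (Nat.sqrt k₀) * (ξ (k₀ / Nat.sqrt k₀) - (1/2) * ξ (Nat.sqrt k₀)))) :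
    (∀ k₀ : ℕ, 4 ≤ k₀ → k₀ ≤ α / 2 - 1 → 0 < x k₀) ∧
    (∀ k₀ : ℕ, 5 ≤ k₀ → k₀ ≤ α / 2 - 1 →
      x (k₀ - 1) ≤ x k₀ ∧ (x (k₀ - 1) = x k₀ ↔ Nat.Prime k₀)) := by
  obtain rfl : x = lowerEssentialValue ξ := funext hx
  have h₂ : 0 < ξ 2 := hpos.trans (hmono two_pos)
  have hΔ := coeffIncrement_nonneg h₂ hmono
  have hΔ₂ : ∀ n, 2 ≤ n → coeffIncrement ξ n ≠ 0 := fun _ hn =>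
    (coeffIncrement_pos h₂ hmono hn).ne'
  have hconv := mul_apply_nonneg hΔ hΔ
  have hprime {n : ℕ} (hn : 2 ≤ n) := mul_apply_eq_zero_iff_prime hΔ hΔ coeffIncrement_one
    coeffIncrement_one hΔ₂ hΔ₂ hn
  refine ⟨fun k hk _ => ?_, fun k hk _ => ?_⟩
  · have h₄ : 0 < (coeffIncrement ξ * coeffIncrement ξ) 4 :=
      (hconv 4).lt_of_ne' ((hprime (n := 4) (by norm_num)).not.2 (by norm_num))
    have := single_le_sum (fun n _ => hconv n) (show 4 ∈ Ioc 0 k from mem_Ioc.2 ⟨by norm_num, hk⟩)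
    rw [lowerEssentialValue_eq_half_sum hk]
    linarith
  · have hstep := lowerEssentialValue_sub_pred (ξ := ξ) hk
    refine ⟨sub_nonneg.1 (hstep ▸ mul_nonneg (by norm_num) (hconv k)), ?_⟩
    rw [eq_comm, ← sub_eq_zero, hstep, mul_eq_zero, hprime (by omega)]
    norm_num

/-- For even α ≥ 16 and strictly increasing positive coefficients ξ, the lower
essential polynomial values x_{k₀} satisfy 0 < x₄ ≤ x₅ ≤ ⋯ ≤ x_{α/2−1}, with
x_{k₀−1} = x_{k₀} iff k₀ is prime. -/
theorem lower_essential_polynomial_monotone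
    (α : ℕ) (hα_even : Even α) (hα : 16 ≤ α)
    (ξ : ℕ → ℝ) (hpos : 0 < ξ 0) (hmono : StrictMono ξ)
    (x : ℕ → ℝ)
    (hx : ∀ k₀ : ℕ, x k₀ =
      (∑ n ∈ Finset.Ico 2 (Nat.sqrt k₀), ξ n * (ξ (k₀ / n) - ξ (k₀ / (n + 1)))) +
      (if Nat.sqrt k₀ = k₀ / Nat.sqrt k₀ then (1/2) * ξ (Nat.sqrt k₀) ^ 2
       else ξ (Nat.sqrt k₀) * (ξ (k₀ / Nat.sqrt k₀) - (1/2) * ξ (Nat.sqrt k₀)))) :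
    (∀ k₀ : ℕ, 4 ≤ k₀ → k₀ ≤ α / 2 - 1 → 0 < x k₀) ∧
    (∀ k₀ : ℕ, 5 ≤ k₀ → k₀ ≤ α / 2 - 1 →
      x (k₀ - 1) ≤ x k₀ ∧ (x (k₀ - 1) = x k₀ ↔ Nat.Prime k₀)) :=
  lower_essential_polynomial_monotone_general α ξ hpos hmono x hx
end

section
/- Let k₀ ∈ ℕ, k₀ ≥ 4, and 2 ≤ n ≤ ⌊√k₀⌋ − 1. Then for every real k with k₀ < k < k₀ + 1, the set of integers n' such that the rectangle [n, n+1] × [n', n'+1] meets the hyperbola {(x,y) : xy = k} in more than one point is exactly {⌊k₀/(n+1)⌋, ⌊k₀/(n+1)⌋ + 1, …, ⌊k₀/n⌋}; in particular this set does not depend on k ∈ (k₀, k₀+1). -/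
/-!
On the closed positive quadrant a non-degenerate box `[a, a'] × [b, b']` with `a > 0` meets the
hyperbola `xy = k > 0` in more than one point exactly when its lower-left corner lies strictly
below the hyperbola and its upper-right corner strictly above it: the hyperbola is strictly
decreasing, and between the two corners it crosses the box along a non-degenerate arc. For the
box `[n, n+1] × [n', n'+1]` these are the conditions `n n' < k < (n+1)(n'+1)`, and for
`k₀ < k < k₀ + 1` they only depend on `k₀`, because the corner products are integers. They read
`n n' ≤ k₀ < (n+1)(n'+1)`, i.e. `k₀ / (n+1) ≤ n' ≤ k₀ / n` in floor division.
-/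

open Set

section BoxHyperbola

variable {a a' b b' k : ℝ}

lemma mul_lt_lt_mul_of_two_points_on_hyperbola {x₁ y₁ x₂ y₂ : ℝ} (ha : 0 ≤ a) (hb : 0 ≤ b)
    (hk : 0 < k) (hax₁ : a ≤ x₁) (hx : x₁ < x₂) (hx₂a' : x₂ ≤ a') (hby₂ : b ≤ y₂) (hy₁b' : y₁ ≤ b')
    (h₁ : x₁ * y₁ = k) (h₂ : x₂ * y₂ = k) :
    a * b < k ∧ k < a' * b' := by
  have hx₁ : 0 ≤ x₁ := ha.trans hax₁
  have hy₁ : 0 < y₁ := pos_of_mul_pos_right (h₁ ▸ hk) hx₁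
  have hy₂ : 0 < y₂ := pos_of_mul_pos_right (h₂ ▸ hk) (hx₁.trans hx.le)
  constructor
  · calc a * b ≤ x₁ * y₂ := mul_le_mul hax₁ hby₂ hb hx₁
      _ < x₂ * y₂ := by gcongr
      _ = k := h₂
  · calc k = x₁ * y₁ := h₁.symm
      _ < x₂ * y₁ := by gcongr
      _ ≤ a' * b' := mul_le_mul hx₂a' hy₁b' hy₁.le ((hx₁.trans hx.le).trans hx₂a')

lemma mul_lt_lt_mul_of_nontrivial_box_inter_hyperbola (ha : 0 ≤ a) (hb : 0 ≤ b) (hk : 0 < k)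
    (h : ((Icc a a' ×ˢ Icc b b') ∩ {p : ℝ × ℝ | p.1 * p.2 = k}).Nontrivial) :
    a * b < k ∧ k < a' * b' := by
  obtain ⟨⟨x₁, y₁⟩, ⟨⟨⟨hax₁, hx₁a'⟩, hby₁, hy₁b'⟩, h₁ : x₁ * y₁ = k⟩,
    ⟨x₂, y₂⟩, ⟨⟨⟨hax₂, hx₂a'⟩, hby₂, hy₂b'⟩, h₂ : x₂ * y₂ = k⟩, hne⟩ := h
  have hx : x₁ ≠ x₂ := by
    rintro rfl
    have hx₁ : x₁ ≠ 0 := left_ne_zero_of_mul (h₁ ▸ hk.ne')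
    exact hne (Prod.ext rfl (mul_left_cancel₀ hx₁ (h₁.trans h₂.symm)))
  rcases hx.lt_or_gt with hx | hx
  · exact mul_lt_lt_mul_of_two_points_on_hyperbola ha hb hk hax₁ hx hx₂a' hby₂ hy₁b' h₁ h₂
  · exact mul_lt_lt_mul_of_two_points_on_hyperbola ha hb hk hax₂ hx hx₁a' hby₁ hy₂b' h₂ h₁

lemma mem_box_inter_hyperbola_of_mem_Icc {y : ℝ} (ha : 0 < a) (ha' : 0 < a') (hk : 0 < k)
    (hy : y ∈ Icc (max b (k / a')) (min b' (k / a))) :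
    (k / y, y) ∈ (Icc a a' ×ˢ Icc b b') ∩ {p : ℝ × ℝ | p.1 * p.2 = k} := by
  obtain ⟨hby, hy_lo⟩ := max_le_iff.mp hy.1
  obtain ⟨hyb', hy_hi⟩ := le_min_iff.mp hy.2
  have hy : 0 < y := (div_pos hk ha').trans_le hy_lo
  refine ⟨⟨⟨?_, ?_⟩, hby, hyb'⟩, div_mul_cancel₀ k hy.ne'⟩
  · rwa [le_div_iff₀ hy, ← le_div_iff₀' ha]
  · rwa [div_le_iff₀ hy, ← div_le_iff₀' ha']

lemma nontrivial_box_inter_hyperbola_iff (ha : 0 < a) (haa' : a < a') (hb : 0 ≤ b)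
    (hbb' : b < b') (hk : 0 < k) :
    ((Icc a a' ×ˢ Icc b b') ∩ {p : ℝ × ℝ | p.1 * p.2 = k}).Nontrivial ↔
      a * b < k ∧ k < a' * b' := by
  refine ⟨mul_lt_lt_mul_of_nontrivial_box_inter_hyperbola ha.le hb hk, fun ⟨hlo, hhi⟩ => ?_⟩
  have ha' : 0 < a' := ha.trans haa'
  have hlt : max b (k / a') < min b' (k / a) := by
    refine max_lt (lt_min hbb' ?_) (lt_min ?_ (div_lt_div_of_pos_left hk ha haa'))
    · rwa [lt_div_iff₀ ha, mul_comm]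
    · rwa [div_lt_iff₀ ha', mul_comm]
  exact ⟨_, mem_box_inter_hyperbola_of_mem_Icc ha ha' hk (left_mem_Icc.mpr hlt.le),
    _, mem_box_inter_hyperbola_of_mem_Icc ha ha' hk (right_mem_Icc.mpr hlt.le),
    fun h => hlt.ne (congrArg Prod.snd h)⟩

end BoxHyperbola

section BetweenConsecutiveIntegers

variable {k : ℝ} {k₀ : ℕ}

lemma natCast_lt_iff_le_of_mem_Ioo (hk : k ∈ Ioo (k₀ : ℝ) (k₀ + 1)) (m : ℕ) :
    (m : ℝ) < k ↔ m ≤ k₀ := by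
  refine ⟨fun h => ?_, fun h => (Nat.cast_le.mpr h).trans_lt hk.1⟩
  exact Nat.lt_succ_iff.mp (by exact_mod_cast h.trans hk.2)

lemma lt_natCast_iff_lt_of_mem_Ioo (hk : k ∈ Ioo (k₀ : ℝ) (k₀ + 1)) (m : ℕ) :
    k < m ↔ k₀ < m := by
  refine ⟨fun h => by exact_mod_cast hk.1.trans h, fun h => hk.2.trans_le ?_⟩
  exact_mod_cast Nat.succ_le_of_lt h

end BetweenConsecutiveIntegers

theorem essential_regions_constant_general
    (k₀ n : ℕ) (hn : 2 ≤ n) :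
    ∀ k : ℝ, (k₀ : ℝ) < k → k < (k₀ : ℝ) + 1 →
      {n' : ℕ |
        ((Set.Icc (n : ℝ) ((n : ℝ) + 1) ×ˢ Set.Icc (n' : ℝ) ((n' : ℝ) + 1)) ∩
          {p : ℝ × ℝ | p.1 * p.2 = k}).Nontrivial}
        = Set.Icc (k₀ / (n + 1)) (k₀ / n) := by
  intro k hk₀k hkk₀
  have hk : k ∈ Ioo (k₀ : ℝ) (k₀ + 1) := ⟨hk₀k, hkk₀⟩
  have hn₀ : 0 < n := by omega
  ext n'
  rw [mem_ofPred_eq, mem_Icc, nontrivial_box_inter_hyperbola_iff (Nat.cast_pos.mpr hn₀)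
    (lt_add_one _) n'.cast_nonneg (lt_add_one _) (k₀.cast_nonneg.trans_lt hk₀k)]
  have hlower := natCast_lt_iff_le_of_mem_Ioo hk (n * n')
  have hupper := lt_natCast_iff_lt_of_mem_Ioo hk ((n + 1) * (n' + 1))
  push_cast at hlower hupper
  have hdiv_n : n' ≤ k₀ / n ↔ n * n' ≤ k₀ := by
    rw [Nat.le_div_iff_mul_le hn₀, mul_comm]
  have hdiv_succ : k₀ / (n + 1) ≤ n' ↔ k₀ < (n + 1) * (n' + 1) := by
    rw [← Nat.lt_succ_iff, Nat.div_lt_iff_lt_mul n.succ_pos, mul_comm]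
  rw [hlower, hupper, hdiv_n, hdiv_succ, and_comm]

/-- For k₀ ≥ 4, 2 ≤ n ≤ ⌊√k₀⌋ − 1, and any real k with k₀ < k < k₀+1, the set
of integers n' for which [n,n+1] × [n',n'+1] meets the hyperbola xy = k in
more than one point is exactly {⌊k₀/(n+1)⌋, …, ⌊k₀/n⌋}; in particular it
does not depend on k ∈ (k₀, k₀+1). -/
theorem essential_regions_constant
    (k₀ n : ℕ) (hk₀ : 4 ≤ k₀) (hn : 2 ≤ n) (hn' : n ≤ Nat.sqrt k₀ - 1) :
    ∀ k : ℝ, (k₀ : ℝ) < k → k < (k₀ : ℝ) + 1 →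
      {n' : ℕ |
        ((Set.Icc (n : ℝ) ((n : ℝ) + 1) ×ˢ Set.Icc (n' : ℝ) ((n' : ℝ) + 1)) ∩
          {p : ℝ × ℝ | p.1 * p.2 = k}).Nontrivial}
        = Set.Icc (k₀ / (n + 1)) (k₀ / n) :=
  essential_regions_constant_general k₀ n hn
end
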